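/- arXiv:math/0509195 — 3 statements merged into one kernel-verified Lean document; each statement's English description precedes it below -/
import Mathlib

section
/- Every surjective group homomorphism from the free group F₂ on two generators onto the quaternion group Q₈ has the same kernel. Equivalently, if α, β : F₂ → Q₈ are surjective homomorphisms, then ker α = ker β. -/
/-!
A surjection `α : F₂ → Q₈` sends the generators `x, y` to a non-commuting pair `A, B`, and every
non-commuting pair in `Q₈` satisfies the defining relations `A⁴ = 1`, `B² = A²`, `AB = BA⁻¹`.
Hence `a 1 ↦ A`, `xa 0 ↦ B` extends to an endomorphism `σ` of `Q₈` with `σ ∘ π = α`, where `π`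
is the standard map `x ↦ a 1`, `y ↦ xa 0`. Since `α` is onto, so is `σ`, hence `σ` is injective
and `ker α = ker π`.
-/

open Function

namespace QuaternionGroup

section lift

variable {n : ℕ} {G : Type*} [Group G] {A B : G}

theorem pow_val_add [NeZero n] (hA : A ^ (2 * n) = 1) (i j : ZMod (2 * n)) :
    A ^ (i + j).val = A ^ i.val * A ^ j.val := by
  rw [ZMod.val_add, ← pow_eq_pow_mod _ hA, pow_add]

theorem pow_val_natCast (hA : A ^ (2 * n) = 1) (k : ℕ) :
    A ^ (k : ZMod (2 * n)).val = A ^ k := by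
  rw [ZMod.val_natCast, ← pow_eq_pow_mod _ hA]

theorem pow_val_neg [NeZero n] (hA : A ^ (2 * n) = 1) (i : ZMod (2 * n)) :
    A ^ (-i).val = (A ^ i.val)⁻¹ := by
  rw [eq_inv_iff_mul_eq_one, ← pow_val_add hA, neg_add_cancel, ZMod.val_zero, pow_zero]

theorem pow_mul_eq_mul_inv_pow (hAB : A * B = B * A⁻¹) (k : ℕ) :
    A ^ k * B = B * (A ^ k)⁻¹ := by
  rw [← inv_pow]
  exact (SemiconjBy.pow_right (hAB.symm : SemiconjBy B A⁻¹ A) k).symm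

def lift [NeZero n] (hA : A ^ (2 * n) = 1) (hB : B ^ 2 = A ^ n) (hAB : A * B = B * A⁻¹) :
    QuaternionGroup n →* G where
  toFun
    | .a i => A ^ i.val
    | .xa i => B * A ^ i.val
  map_one' := by
    show A ^ (0 : ZMod (2 * n)).val = 1
    rw [ZMod.val_zero, pow_zero]
  map_mul' := by
    rintro (i | i) (j | j)
    · simp only [a_mul_a, pow_val_add hA]
    · simp only [a_mul_xa, sub_eq_neg_add, pow_val_add hA, pow_val_neg hA, ← mul_assoc,
        ← pow_mul_eq_mul_inv_pow hAB]
    · simp only [xa_mul_a, pow_val_add hA, mul_assoc]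
    · rw [xa_mul_xa, show (n : ZMod (2 * n)) + j - i = n + (-i + j) by ring]
      simp only [pow_val_add hA, pow_val_natCast hA, pow_val_neg hA, ← hB, sq]
      rw [mul_assoc B (A ^ i.val), ← mul_assoc (A ^ i.val), pow_mul_eq_mul_inv_pow hAB]
      group

@[simp]
theorem lift_a_one [NeZero n] (hA : A ^ (2 * n) = 1) (hB : B ^ 2 = A ^ n)
    (hAB : A * B = B * A⁻¹) : lift hA hB hAB (a 1) = A := by
  show A ^ (1 : ZMod (2 * n)).val = A
  rw [← Nat.cast_one, pow_val_natCast hA, pow_one]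

@[simp]
theorem lift_xa_zero [NeZero n] (hA : A ^ (2 * n) = 1) (hB : B ^ 2 = A ^ n)
    (hAB : A * B = B * A⁻¹) : lift hA hB hAB (xa 0) = B := by
  show B * A ^ (0 : ZMod (2 * n)).val = B
  rw [ZMod.val_zero, pow_zero, mul_one]

end lift

end QuaternionGroup

theorem FreeGroup.commute_of_surjective {ι G : Type*} [Group G] {α : FreeGroup ι →* G}
    (hα : Surjective α) (h : ∀ i j, Commute (α (.of i)) (α (.of j))) (g k : G) :
    Commute g k := by
  have hgen : Subgroup.closure (Set.range fun i => α (.of i)) = ⊤ := by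
    rw [← FreeGroup.lift_surjective_iff_closure_range_eq_top]
    rwa [← FreeGroup.lift.apply_symm_apply α] at hα
  have hcomm : ∀ x ∈ Set.range fun i => α (.of i), ∀ y ∈ Set.range fun i => α (.of i),
      x * y = y * x := by
    rintro _ ⟨i, rfl⟩ _ ⟨j, rfl⟩
    exact h i j
  have hcent (x : G) := Subgroup.closure_le_centralizer_centralizer _ (hgen ▸ Subgroup.mem_top x)
  exact Set.centralizer_centralizer_comm_of_comm hcomm g (hcent g) k (hcent k)

namespace QuaternionGroup

theorem commute_or_quaternion_relations (a b : QuaternionGroup 2) :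
    a * b = b * a ∨ b ^ 2 = a ^ 2 ∧ a * b = b * a⁻¹ := by
  revert a b
  decide

theorem a_one_mul_xa_zero_ne : (a 1 : QuaternionGroup 2) * xa 0 ≠ xa 0 * a 1 := by decide

theorem pow_four_eq_one (g : QuaternionGroup 2) : g ^ (2 * 2) = 1 := by
  revert g
  decide

theorem quaternion_relations_of_surjective {α : FreeGroup (Fin 2) →* QuaternionGroup 2}
    (hα : Surjective α) :
    α (.of 1) ^ 2 = α (.of 0) ^ 2 ∧ α (.of 0) * α (.of 1) = α (.of 1) * (α (.of 0))⁻¹ := by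
  refine (commute_or_quaternion_relations _ _).resolve_left fun hcomm => ?_
  refine a_one_mul_xa_zero_ne (FreeGroup.commute_of_surjective hα (fun i j => ?_) _ _)
  fin_cases i <;> fin_cases j
  exacts [.refl _, hcomm, hcomm.symm, .refl _]

theorem ker_eq_ker_lift_of_surjective {α : FreeGroup (Fin 2) →* QuaternionGroup 2}
    (hα : Surjective α) : α.ker = (FreeGroup.lift ![(a 1 : QuaternionGroup 2), xa 0]).ker := by
  obtain ⟨hB, hAB⟩ := quaternion_relations_of_surjective hα
  set σ := lift (pow_four_eq_one _) hB hAB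
  have hσ : σ.comp (FreeGroup.lift ![a 1, xa 0]) = α := by
    refine FreeGroup.ext_hom _ _ fun i => ?_
    fin_cases i <;> simp [σ]
  have hσ_inj : Injective σ :=
    Finite.injective_iff_surjective.2 <|
      .of_comp (g := FreeGroup.lift _) (by rwa [← MonoidHom.coe_comp, hσ])
  rw [← hσ, MonoidHom.ker_comp_of_injective _ _ hσ_inj]

end QuaternionGroup

/-- Every surjective group homomorphism from the free group on two generators
onto the quaternion group Q₈ has the same kernel. -/
theorem ker_eq_of_surjective_to_quaternion
    (α β : FreeGroup (Fin 2) →* QuaternionGroup 2)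
    (hα : Function.Surjective α) (hβ : Function.Surjective β) :
    α.ker = β.ker := by
  rw [QuaternionGroup.ker_eq_ker_lift_of_surjective hα,
    QuaternionGroup.ker_eq_ker_lift_of_surjective hβ]
end

section
/- Let α : F₂ → Q₈ be the homomorphism from the free group on generators x, y to the quaternion group sending x ↦ i and y ↦ j. Then H = ker α is a characteristic subgroup of F₂, i.e., φ(H) = H for every automorphism φ of F₂. -/
private def qmap (A B : QuaternionGroup 2) : QuaternionGroup 2 → QuaternionGroup 2
  | .a i => A ^ i.val
  | .xa i => B * A ^ i.val

private lemma qrel : ∀ A B : QuaternionGroup 2,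
    A * B ≠ B * A → A ^ 4 = 1 ∧ A ^ 2 = B ^ 2 ∧ A * B = B * A ^ 3 := by decide

private def qhom (A B : QuaternionGroup 2) (h4 : A ^ 4 = 1) (hsq : A ^ 2 = B ^ 2)
    (hc : A * B = B * A ^ 3) : QuaternionGroup 2 →* QuaternionGroup 2 where
  toFun := qmap A B
  map_one' := by
    show qmap A B (.a 0) = 1
    simp [qmap]
  map_mul' := by
    have hpow : ∀ (m : ℕ) (c : ZMod 4), ((m : ZMod 4) = c) → A ^ m = A ^ c.val := by
      intro m c h
      rw [pow_eq_pow_mod m h4, ← h, ZMod.val_natCast]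
    have hkey : ∀ m : ℕ, A ^ m * B = B * A ^ (3 * m) := by
      intro m
      induction m with
      | zero => simp
      | succ k ih =>
          rw [pow_succ, mul_assoc, hc, ← mul_assoc, ih, mul_assoc, ← pow_add]
          ring_nf
    have c1 : ∀ i j : ZMod 4, ((i.val + j.val : ℕ) : ZMod 4) = i + j := by decide
    have c2 : ∀ i j : ZMod 4, ((3 * i.val + j.val : ℕ) : ZMod 4) = j - i := by decide
    have c4 : ∀ i j : ZMod 4,
        ((2 + 3 * i.val + j.val : ℕ) : ZMod 4) = ((2 : ℕ) : ZMod 4) + j - i := by decide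
    rintro (i | i) (j | j)
    · rw [QuaternionGroup.a_mul_a]
      show A ^ (i + j).val = A ^ i.val * A ^ j.val
      rw [← pow_add, hpow (i.val + j.val) (i + j) (c1 i j)]
    · rw [QuaternionGroup.a_mul_xa]
      show B * A ^ (j - i).val = A ^ i.val * (B * A ^ j.val)
      rw [← mul_assoc, hkey, mul_assoc, ← pow_add, hpow (3 * i.val + j.val) (j - i) (c2 i j)]
    · rw [QuaternionGroup.xa_mul_a]
      show B * A ^ (i + j).val = B * A ^ i.val * A ^ j.val
      rw [mul_assoc, ← pow_add, hpow (i.val + j.val) (i + j) (c1 i j)]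
    · rw [QuaternionGroup.xa_mul_xa]
      show A ^ (((2 : ℕ) : ZMod 4) + j - i).val = B * A ^ i.val * (B * A ^ j.val)
      have h' : B * A ^ i.val * (B * A ^ j.val) = B * (A ^ i.val * B) * A ^ j.val := by
        group
      rw [h', hkey, ← mul_assoc B B, ← pow_two B, ← hsq, ← pow_add, ← pow_add,
        hpow (2 + 3 * i.val + j.val) (((2 : ℕ) : ZMod 4) + j - i) (c4 i j)]

/-- The kernel of the homomorphism F₂ → Q₈, x ↦ i, y ↦ j, is a
characteristic subgroup of F₂: it is mapped onto itself by every
automorphism of F₂. -/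
theorem ker_to_quaternion_characteristic :
    let α : FreeGroup (Fin 2) →* QuaternionGroup 2 :=
      FreeGroup.lift (fun t => if t = 0 then QuaternionGroup.a 1 else QuaternionGroup.xa 0)
    ∀ φ : FreeGroup (Fin 2) ≃* FreeGroup (Fin 2),
      α.ker.map φ.toMonoidHom = α.ker := by
  intro α φ
  -- α is surjective
  have hx : α (FreeGroup.of 0) = QuaternionGroup.a 1 := by simp [α]
  have hy : α (FreeGroup.of 1) = QuaternionGroup.xa 0 := by simp [α]
  have hvv : ∀ k : ZMod 4, ((k.val : ℕ) : ZMod 4) = k := by decide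
  have hαsurj : Function.Surjective α := by
    rintro (k | k)
    · refine ⟨FreeGroup.of 0 ^ k.val, ?_⟩
      rw [map_pow, hx, QuaternionGroup.a_one_pow, hvv]
    · refine ⟨FreeGroup.of 1 * FreeGroup.of 0 ^ k.val, ?_⟩
      rw [map_mul, map_pow, hx, hy, QuaternionGroup.a_one_pow,
        QuaternionGroup.xa_mul_a, hvv, zero_add]
  set β : FreeGroup (Fin 2) →* QuaternionGroup 2 := α.comp φ.symm.toMonoidHom with hβ
  have hβsurj : Function.Surjective β := hαsurj.comp φ.symm.surjective
  set A := β (FreeGroup.of 0) with hA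
  set B := β (FreeGroup.of 1) with hB
  -- A and B do not commute
  have hnc : A * B ≠ B * A := by
    intro hco
    have H1 : ∀ g, Commute A (β g) ∧ Commute B (β g) := by
      intro g
      induction g using FreeGroup.induction_on with
      | C1 => simp [Commute.one_right]
      | of i =>
          fin_cases i
          · exact ⟨Commute.refl A, hco.symm⟩
          · exact ⟨hco, Commute.refl B⟩
      | inv_of i ih =>
          rw [map_inv]
          exact ⟨ih.1.inv_right, ih.2.inv_right⟩
      | mul g h ihg ihh =>
          rw [map_mul]
          exact ⟨ihg.1.mul_right ihh.1, ihg.2.mul_right ihh.2⟩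
    have H2 : ∀ g h, Commute (β g) (β h) := by
      intro g h
      induction g using FreeGroup.induction_on with
      | C1 => simp [Commute.one_left]
      | of i =>
          fin_cases i
          · exact (H1 h).1
          · exact (H1 h).2
      | inv_of i ih =>
          rw [map_inv]
          exact ih.inv_left
      | mul g g' ihg ihg' =>
          rw [map_mul]
          exact ihg.mul_left ihg'
    obtain ⟨g, hg⟩ := hβsurj (QuaternionGroup.a 1)
    obtain ⟨h, hh⟩ := hβsurj (QuaternionGroup.xa 0)
    have hcm : (QuaternionGroup.a 1 : QuaternionGroup 2) * QuaternionGroup.xa 0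
        = QuaternionGroup.xa 0 * QuaternionGroup.a 1 := by
      have := H2 g h
      rw [hg, hh] at this
      exact this
    exact absurd hcm (by decide)
  obtain ⟨h4, hsq, hc⟩ := qrel A B hnc
  set σ : QuaternionGroup 2 →* QuaternionGroup 2 := qhom A B h4 hsq hc with hσ
  have hcomp : σ.comp α = β := by
    apply FreeGroup.ext_hom
    intro t
    fin_cases t
    · show σ (α (FreeGroup.of 0)) = β (FreeGroup.of 0)
      rw [hx]
      show qmap A B (QuaternionGroup.a 1) = A
      show A ^ (1 : ZMod 4).val = A
      rw [show (1 : ZMod 4).val = 1 from rfl, pow_one]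
    · show σ (α (FreeGroup.of 1)) = β (FreeGroup.of 1)
      rw [hy]
      show qmap A B (QuaternionGroup.xa 0) = B
      show B * A ^ (0 : ZMod 4).val = B
      rw [show (0 : ZMod 4).val = 0 from rfl, pow_zero, mul_one]
  have hσβ : ∀ g, σ (α g) = β g := fun g => DFunLike.congr_fun hcomp g
  have hσsurj : Function.Surjective σ := by
    intro q
    obtain ⟨g, hg⟩ := hβsurj q
    exact ⟨α g, by rw [hσβ g, hg]⟩
  have hσinj : Function.Injective σ := Finite.injective_iff_surjective.mpr hσsurj
  have hker : β.ker = α.ker := by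
    ext g
    constructor
    · intro hg
      have : σ (α g) = σ 1 := by
        rw [hσβ g, map_one]; exact hg
      exact hσinj this
    · intro hg
      have : α g = 1 := hg
      show β g = 1
      rw [← hσβ g, this, map_one]
  rw [Subgroup.map_equiv_eq_comap_symm', MonoidHom.comap_ker]
  exact hker
end

section
/- Let λ ∈ ℂ \ {0,1} and ζ with ζ² = 1 - λ. For the involution σ(x,z) = ((x - λz)/ζ, (x-z)/ζ), the functions p₂ = x - (1-ζ)z and p₃ = x(x - λz) are σ-invariant, and on the curve xz(x-z)(x-λz) = 1 they satisfy the relation p₃(p₂² - p₃) = -(1-ζ)², i.e., p₂² - p₃ = -(1-ζ)² z (x - z). -/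
/-!
Substituting `λ = 1 - ζ²` turns each claim into a polynomial identity in `x`, `z`, `ζ`,
up to clearing the denominator `ζ`: in `p₂ ∘ σ` the numerator is
`(x - λz) - (1 - ζ)(x - z) = ζ (x - (1 - ζ) z)`, and in `p₃ ∘ σ` the factor
`(x - λz) - λ(x - z) = ζ² x` cancels `ζ²`. The relation on the curve is the identity
`p₂² - p₃ = -(1 - ζ)² z (x - z)` multiplied by `p₃ = x (x - λz)`.
-/

section Involution

variable {K : Type*} [Field K] {l ζ : K} (x z : K)

theorem p₂_comp_sigma (hζ : ζ ^ 2 = 1 - l) (hζ0 : ζ ≠ 0) :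
    (x - l * z) / ζ - (1 - ζ) * ((x - z) / ζ) = x - (1 - ζ) * z := by
  field_simp
  linear_combination (-z) * hζ

theorem p₃_comp_sigma (hζ : ζ ^ 2 = 1 - l) (hζ0 : ζ ≠ 0) :
    (x - l * z) / ζ * ((x - l * z) / ζ - l * ((x - z) / ζ)) = x * (x - l * z) := by
  field_simp
  linear_combination (-x * (x - l * z)) * hζ

theorem p₂_sq_sub_p₃ (hζ : ζ ^ 2 = 1 - l) :
    (x - (1 - ζ) * z) ^ 2 - x * (x - l * z) = -(1 - ζ) ^ 2 * z * (x - z) := by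
  linear_combination (x * z) * hζ

theorem p₃_mul_p₂_sq_sub_p₃_of_curve (hζ : ζ ^ 2 = 1 - l)
    (hcurve : x * z * (x - z) * (x - l * z) = 1) :
    x * (x - l * z) * ((x - (1 - ζ) * z) ^ 2 - x * (x - l * z)) = -(1 - ζ) ^ 2 := by
  rw [p₂_sq_sub_p₃ x z hζ]
  linear_combination (-(1 - ζ) ^ 2) * hcurve

end Involution

theorem invariants_of_sigma_general
    (l ζ x z : ℂ)
    (hζ : ζ ^ 2 = 1 - l) (hζ0 : ζ ≠ 0) :
    ((x - l * z) / ζ - (1 - ζ) * ((x - z) / ζ) = x - (1 - ζ) * z) ∧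
    ((x - l * z) / ζ * ((x - l * z) / ζ - l * ((x - z) / ζ)) = x * (x - l * z)) ∧
    ((x - (1 - ζ) * z) ^ 2 - x * (x - l * z) = -(1 - ζ) ^ 2 * z * (x - z)) ∧
    (x * z * (x - z) * (x - l * z) = 1 →
      x * (x - l * z) * ((x - (1 - ζ) * z) ^ 2 - x * (x - l * z)) =
        -(1 - ζ) ^ 2) :=
  ⟨p₂_comp_sigma x z hζ hζ0, p₃_comp_sigma x z hζ hζ0, p₂_sq_sub_p₃ x z hζ,
    p₃_mul_p₂_sq_sub_p₃_of_curve x z hζ⟩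

/-- For ζ² = 1 - λ, ζ ≠ 0, the functions p₂ = x - (1-ζ)z and p₃ = x(x-λz) are
invariant under σ(x,z) = ((x-λz)/ζ, (x-z)/ζ); moreover
p₂² - p₃ = -(1-ζ)²·z·(x-z) identically, so that on the curve
xz(x-z)(x-λz) = 1 one has p₃(p₂² - p₃) = -(1-ζ)². -/
theorem invariants_of_sigma
    (l ζ x z : ℂ) (h0 : l ≠ 0) (h1 : l ≠ 1)
    (hζ : ζ ^ 2 = 1 - l) (hζ0 : ζ ≠ 0) :
    ((x - l * z) / ζ - (1 - ζ) * ((x - z) / ζ) = x - (1 - ζ) * z) ∧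
    ((x - l * z) / ζ * ((x - l * z) / ζ - l * ((x - z) / ζ)) = x * (x - l * z)) ∧
    ((x - (1 - ζ) * z) ^ 2 - x * (x - l * z) = -(1 - ζ) ^ 2 * z * (x - z)) ∧
    (x * z * (x - z) * (x - l * z) = 1 →
      x * (x - l * z) * ((x - (1 - ζ) * z) ^ 2 - x * (x - l * z)) =
        -(1 - ζ) ^ 2) :=
  invariants_of_sigma_general l ζ x z hζ hζ0
end
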